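/- Let f : X → Y be a base-resolvable function from a topological space X to a Hausdorff space Y. Then AC(f) = WC(f), i.e., f is almost continuous at a point x ∈ X if and only if f is weakly continuous at x. -/

import Mathlib

open Set Filter Topology

/-- A subset `A` of a topological space `X` is *resolvable* if for every closed set `F ⊆ X`
the set `closure (F ∩ A) ∩ closure (F \ A)` is nowhere dense in the subspace `F`. -/
def IsResolvableSet {X : Type*} [TopologicalSpace X] (A : Set X) : Prop :=
  ∀ F : Set X, IsClosed F →
    IsNowhereDense (Subtype.val ⁻¹' (closure (F ∩ A) ∩ closure (F \ A)) : Set F)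

/-- A function `f : X → Y` is *weakly discontinuous* if every subspace `A ⊆ X` contains a
subset `U ⊆ A` which is open and dense in `A` and such that `f` restricted to `U` is
continuous. -/
def WeaklyDiscontinuous {X Y : Type*} [TopologicalSpace X] [TopologicalSpace Y]
    (f : X → Y) : Prop :=
  ∀ A : Set X, ∃ U : Set X, U ⊆ A ∧ (∃ V : Set X, IsOpen V ∧ U = V ∩ A) ∧
    A ⊆ closure U ∧ ContinuousOn f U

/-- A function is *resolvable* if preimages of resolvable sets are resolvable. -/
def ResolvableFunction {X Y : Type*} [TopologicalSpace X] [TopologicalSpace Y]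
    (f : X → Y) : Prop :=
  ∀ R : Set Y, IsResolvableSet R → IsResolvableSet (f ⁻¹' R)

/-- A function is *open-resolvable* if preimages of open sets are resolvable. -/
def OpenResolvableFunction {X Y : Type*} [TopologicalSpace X] [TopologicalSpace Y]
    (f : X → Y) : Prop :=
  ∀ U : Set Y, IsOpen U → IsResolvableSet (f ⁻¹' U)

/-- A base of the topology is *countably additive* if it is closed under countable unions. -/
def CountablyAdditiveBase {Y : Type*} [TopologicalSpace Y] (B : Set (Set Y)) : Prop :=
  TopologicalSpace.IsTopologicalBasis B ∧ ∀ C ⊆ B, C.Countable → ⋃₀ C ∈ B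

/-- A function is *base-resolvable* if there is a countably additive base of the topology of the
codomain whose members have resolvable preimages. -/
def BaseResolvableFunction {X Y : Type*} [TopologicalSpace X] [TopologicalSpace Y]
    (f : X → Y) : Prop :=
  ∃ B : Set (Set Y), CountablyAdditiveBase B ∧ ∀ U ∈ B, IsResolvableSet (f ⁻¹' U)

/-- A space `X` is *Preiss-Simon at `x`* if for every `A ⊆ X` with `x ∈ closure A` there is
a sequence `(U n)` of nonempty, relatively open subsets of `A` converging to `x`, i.e. every
neighborhood of `x` contains all but finitely many of the sets `U n`. -/
def PreissSimonAt {X : Type*} [TopologicalSpace X] (x : X) : Prop :=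
  ∀ A : Set X, x ∈ closure A →
    ∃ U : ℕ → Set X, (∀ n, U n ⊆ A) ∧ (∀ n, (U n).Nonempty) ∧
      (∀ n, IsOpen (Subtype.val ⁻¹' (U n) : Set A)) ∧
      ∀ V ∈ 𝓝 x, ∀ᶠ n in atTop, U n ⊆ V

/-- A *Preiss-Simon space* is a space which is Preiss-Simon at each of its points. -/
def PreissSimonSpace (X : Type*) [TopologicalSpace X] : Prop :=
  ∀ x : X, PreissSimonAt x

/-- A function is *scatteredly continuous* if its restriction to any nonempty subset has a
point of continuity. -/
def ScatteredlyContinuous {X Y : Type*} [TopologicalSpace X] [TopologicalSpace Y]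
    (f : X → Y) : Prop :=
  ∀ A : Set X, A.Nonempty → ∃ a ∈ A, ContinuousWithinAt f A a

/-- `f` is *almost continuous at `x`* if for every neighborhood `Oy` of `f x` the preimage
`f ⁻¹' Oy` is dense in some neighborhood of `x`. -/
def AlmostContinuousAt {X Y : Type*} [TopologicalSpace X] [TopologicalSpace Y]
    (f : X → Y) (x : X) : Prop :=
  ∀ Oy ∈ 𝓝 (f x), ∃ N : Set X, IsOpen N ∧ x ∈ N ∧ N ⊆ closure (f ⁻¹' Oy)

/-- `f` is *weakly continuous at `x`* if for every neighborhood `Oy` of `f x` the interior of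
the preimage `f ⁻¹' Oy` is dense in some neighborhood of `x`. -/
def WeaklyContinuousAt {X Y : Type*} [TopologicalSpace X] [TopologicalSpace Y]
    (f : X → Y) (x : X) : Prop :=
  ∀ Oy ∈ 𝓝 (f x), ∃ N : Set X, IsOpen N ∧ x ∈ N ∧ N ⊆ closure (interior (f ⁻¹' Oy))

/-- `X` has a countable π-base: a countable family of nonempty open sets such that every
nonempty open set contains a member of the family. -/
def HasCountablePiBase (X : Type*) [TopologicalSpace X] : Prop :=
  ∃ P : Set (Set X), P.Countable ∧ (∀ U ∈ P, IsOpen U ∧ U.Nonempty) ∧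
    ∀ U : Set X, IsOpen U → U.Nonempty → ∃ V ∈ P, V ⊆ U

/-!
Taking `F = X` in the definition, a resolvable set `A` has nowhere dense frontier
`closure A ∩ closure Aᶜ`. Then the open set `interior (closure A) \ closure (interior A)`, which lies
in the frontier, is empty, so every open set in which `A` is dense already has `interior A` dense
in it. Applied to the preimages of basic neighbourhoods of `f x`, this turns almost continuity at
`x` into weak continuity; the converse holds for every function.
-/

open TopologicalSpace

section

variable {X : Type*} [TopologicalSpace X]

theorem IsResolvableSet.isNowhereDense_frontier {A : Set X} (h : IsResolvableSet A) :
    IsNowhereDense (frontier A) := by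
  have := (h univ isClosed_univ).image_val
  rwa [Subtype.image_preimage_coe, univ_inter, univ_inter, ← compl_eq_univ_sdiff,
    ← frontier_eq_closure_inter_closure] at this

theorem interior_closure_subset_closure_interior_of_isNowhereDense_frontier {A : Set X}
    (h : IsNowhereDense (frontier A)) : interior (closure A) ⊆ closure (interior A) := by
  have hdiff : interior (closure A) \ closure (interior A) ⊆ interior (closure (frontier A)) :=
    interior_maximal
      (fun _ hz => subset_closure ⟨interior_subset hz.1, fun hi => hz.2 (subset_closure hi)⟩)
      (isOpen_interior.sdiff isClosed_closure)
  rwa [h, subset_empty_iff, sdiff_eq_empty] at hdiff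

end

section

variable {X Y : Type*} [TopologicalSpace X] [TopologicalSpace Y] {f : X → Y} {x : X}

theorem WeaklyContinuousAt.almostContinuousAt (h : WeaklyContinuousAt f x) :
    AlmostContinuousAt f x := fun Oy hOy => by
  obtain ⟨N, hN, hxN, hNsub⟩ := h Oy hOy
  exact ⟨N, hN, hxN, hNsub.trans (closure_mono interior_subset)⟩

theorem AlmostContinuousAt.weaklyContinuousAt_of_isTopologicalBasis {B : Set (Set Y)}
    (hB : IsTopologicalBasis B) (hfrontier : ∀ U ∈ B, IsNowhereDense (frontier (f ⁻¹' U)))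
    (h : AlmostContinuousAt f x) : WeaklyContinuousAt f x := fun Oy hOy => by
  obtain ⟨U, hUB, hxU, hUOy⟩ := hB.mem_nhds_iff.mp hOy
  obtain ⟨N, hN, hxN, hNsub⟩ := h U ((hB.isOpen hUB).mem_nhds hxU)
  refine ⟨N, hN, hxN, ?_⟩
  calc N ⊆ interior (closure (f ⁻¹' U)) := interior_maximal hNsub hN
    _ ⊆ closure (interior (f ⁻¹' U)) :=
      interior_closure_subset_closure_interior_of_isNowhereDense_frontier (hfrontier U hUB)
    _ ⊆ closure (interior (f ⁻¹' Oy)) := by gcongr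

end

theorem almostContinuous_eq_weaklyContinuous_general {X Y : Type*} [TopologicalSpace X]
    [TopologicalSpace Y] (f : X → Y) (hf : BaseResolvableFunction f) :
    {x : X | AlmostContinuousAt f x} = {x : X | WeaklyContinuousAt f x} := by
  obtain ⟨B, ⟨hB, -⟩, hres⟩ := hf
  ext x
  exact ⟨fun h => h.weaklyContinuousAt_of_isTopologicalBasis hB
      fun U hU => (hres U hU).isNowhereDense_frontier,
    WeaklyContinuousAt.almostContinuousAt⟩

/-- For a base-resolvable function into a Hausdorff space, the set of points of almost
continuity coincides with the set of points of weak continuity. -/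
theorem almostContinuous_eq_weaklyContinuous {X Y : Type*} [TopologicalSpace X]
    [TopologicalSpace Y] [T2Space Y] (f : X → Y) (hf : BaseResolvableFunction f) :
    {x : X | AlmostContinuousAt f x} = {x : X | WeaklyContinuousAt f x} :=
  almostContinuous_eq_weaklyContinuous_general f hf
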